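/- Let μ be a proper (2m−1)-edge-coloring of the complete graph K_{2m} such that every two distinct colors induce a C4-factor. Suppose H = {x_1, …, x_{2^h}} is a set of 2^h vertices (2^h < 2m) whose induced clique uses exactly the 2^h − 1 colors c_1, …, c_{2^h−1}, let c be a color not appearing on the clique induced by H, and let y_i be the vertex joined to x_i by an edge of color c, for each i. Then H′ = {y_1, …, y_{2^h}} is disjoint from H, μ(x_i x_j) = μ(y_i y_j) for all 1 ≤ i ≠ j ≤ 2^h, and the clique induced by H ∪ H′ uses exactly 2^{h+1} − 1 colors. -/

import Mathlib

/-- `φ` is a proper edge-coloring of the complete graph on `V` (given as a function on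
unordered pairs of vertices): two edges sharing a vertex receive distinct colors. -/
def IsProperEdgeColoring {V C : Type*} (φ : Sym2 V → C) : Prop :=
  ∀ u v w : V, u ≠ v → u ≠ w → v ≠ w → φ s(u, v) ≠ φ s(u, w)

/-- The spanning subgraph of the complete graph on `V` consisting of the edges
colored `a` or `b`. -/
def colorPairGraph {V C : Type*} (φ : Sym2 V → C) (a b : C) : SimpleGraph V where
  Adj u v := u ≠ v ∧ (φ s(u, v) = a ∨ φ s(u, v) = b)
  symm := by
    refine ⟨fun u v h => ?_⟩
    exact ⟨h.1.symm, by rw [Sym2.eq_swap]; exact h.2⟩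
  loopless := ⟨fun v h => h.1 rfl⟩

/-- A graph is a `C4`-factor (of the complete graph on its vertex type) if it is
2-regular and every connected component is a 4-cycle (equivalently, for a 2-regular
graph, every connected component has exactly 4 vertices). -/
def IsC4Factor {V : Type*} (G : SimpleGraph V) : Prop :=
  (∀ v : V, (G.neighborSet v).ncard = 2) ∧
  ∀ c : G.ConnectedComponent, c.supp.ncard = 4

/-- The set of colors appearing on edges of the clique induced by the vertex set `S`. -/
def cliqueColors {V C : Type*} (φ : Sym2 V → C) (S : Set V) : Set C :=
  {c | ∃ u ∈ S, ∃ v ∈ S, u ≠ v ∧ φ s(u, v) = c}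

/-!
Fix `x₀ ∈ H`. By properness the `2^{h+1} - 1` edges from `x₀` to the rest of `H ∪ H'` carry
distinct colours, so it suffices to show that every colour of the clique `H ∪ H'` occurs at
`x₀`. Everything rests on one closure property of the `C4`-factors: in a proper colouring an
alternating path `p -a- q -b- r -a- s` closes up with `φ(sp) = b`. Applied to
`yᵢ -c- xᵢ -a- xⱼ -c- yⱼ` it shows that the `c`-partners `H'` form a colour-preserving copy
of `H`. A cross colour `b = φ(xᵢyⱼ)` is moved to `x₀` through `x₀ -a- xᵢ -b- yⱼ -a- yₖ`, with
`a = φ(x₀xᵢ)`: since `H` uses only `2^h - 1` colours, every vertex of `H` sees all of them, so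
`a = φ(xⱼxₖ) = φ(yⱼyₖ)` for some `k`.
-/

open Set Function

variable {V C ι : Type*}

theorem IsProperEdgeColoring.eq_of_color_eq {φ : Sym2 V → C} (hφ : IsProperEdgeColoring φ)
    {u v w : V} (hv : v ≠ u) (hw : w ≠ u) (h : φ s(u, v) = φ s(u, w)) : v = w := by
  by_contra hvw
  exact hφ u v w hv.symm hw.symm hvw h

theorem IsProperEdgeColoring.injOn {φ : Sym2 V → C} (hφ : IsProperEdgeColoring φ) (u : V) :
    InjOn (fun w => φ s(u, w)) {u}ᶜ :=
  fun _ hv _ hw h => hφ.eq_of_color_eq hv hw h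

theorem IsC4Factor.adj_of_path [Finite V] {G : SimpleGraph V} (hG : IsC4Factor G)
    {p q r s : V} (hpr : p ≠ r) (hps : p ≠ s) (hqs : q ≠ s)
    (hpq : G.Adj p q) (hqr : G.Adj q r) (hrs : G.Adj r s) : G.Adj s p := by
  have hreach : ∀ v, G.Reachable p v → v ∈ (G.connectedComponentMk p).supp := fun v h =>
    (SimpleGraph.ConnectedComponent.mem_supp_iff _ _).2
      (SimpleGraph.ConnectedComponent.eq.2 h.symm)
  have hsupp : (G.connectedComponentMk p).supp = {p, q, r, s} := by
    refine (eq_of_subset_of_ncard_le ?_ ?_ (toFinite _)).symm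
    · rintro v (rfl | rfl | rfl | rfl)
      exacts [hreach _ .rfl, hreach _ hpq.reachable, hreach _ (hpq.reachable.trans hqr.reachable),
        hreach _ (hpq.reachable.trans (hqr.reachable.trans hrs.reachable))]
    · rw [hG.2, ncard_insert_of_notMem (by simp [hpq.ne, hpr, hps]),
        ncard_eq_three.2 ⟨q, r, s, hqr.ne, hqs, hrs.ne, rfl⟩]
  obtain ⟨w, hpw : G.Adj p w, hwq⟩ := exists_ne_of_one_lt_ncard (by rw [hG.1 p]; norm_num) q
  have hw : w ∈ ({p, q, r, s} : Set V) := hsupp ▸ hreach w hpw.reachable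
  rcases hw with rfl | rfl | rfl | rfl
  · exact absurd hpw (G.loopless.irrefl _)
  · exact absurd rfl hwq
  · -- otherwise `r` would have the three neighbours `p`, `q`, `s`
    have hle : ({p, q, s} : Set V).ncard ≤ (G.neighborSet w).ncard := by
      refine ncard_le_ncard ?_ (toFinite _)
      rintro v (rfl | rfl | rfl)
      exacts [hpw.symm, hqr.symm, hrs]
    rw [ncard_eq_three.2 ⟨p, q, s, hpq.ne, hps, hqs, rfl⟩, hG.1] at hle
    omega
  · exact hpw.symm

theorem IsProperEdgeColoring.color_eq_of_alternating_path [Finite V] {φ : Sym2 V → C}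
    (hφ : IsProperEdgeColoring φ) {a b : C} (hab : a ≠ b)
    (hC4 : IsC4Factor (colorPairGraph φ a b)) {p q r s : V} (hpq : p ≠ q) (hqr : q ≠ r)
    (hrs : r ≠ s) (h₁ : φ s(p, q) = a) (h₂ : φ s(q, r) = b) (h₃ : φ s(r, s) = a) :
    φ s(s, p) = b := by
  have hpr : p ≠ r := by rintro rfl; exact hab (by rw [← h₁, ← h₂, Sym2.eq_swap])
  have hqs : q ≠ s := by rintro rfl; exact hab (by rw [← h₃, ← h₂, Sym2.eq_swap])
  have hps : p ≠ s := by
    rintro rfl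
    exact hφ p q r hpq hpr hqr (by rw [h₁, Sym2.eq_swap, h₃])
  have hsp : (colorPairGraph φ a b).Adj s p :=
    hC4.adj_of_path hpr hps hqs ⟨hpq, .inl h₁⟩ ⟨hqr, .inr h₂⟩ ⟨hrs, .inl h₃⟩
  refine hsp.2.resolve_left fun h => hqs (hφ.eq_of_color_eq hpq.symm hps.symm ?_)
  rw [h₁, Sym2.eq_swap, h]

def colorsAt (φ : Sym2 V → C) (S : Set V) (v : V) : Set C :=
  (fun w => φ s(v, w)) '' (S \ {v})

theorem colorsAt_subset_cliqueColors {φ : Sym2 V → C} {S : Set V} {v : V} (hv : v ∈ S) :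
    colorsAt φ S v ⊆ cliqueColors φ S := by
  rintro _ ⟨w, ⟨hw, hwv⟩, rfl⟩
  exact ⟨v, hv, w, hw, Ne.symm hwv, rfl⟩

theorem colorsAt_mono {φ : Sym2 V → C} {S T : Set V} (h : S ⊆ T) (v : V) :
    colorsAt φ S v ⊆ colorsAt φ T v :=
  image_mono (sdiff_subset_sdiff_left h)

theorem Set.Finite.cliqueColors {S : Set V} (hS : S.Finite) (φ : Sym2 V → C) :
    (cliqueColors φ S).Finite :=
  (hS.image2 (fun u w => φ s(u, w)) hS).subset
    fun _ ⟨_, hu, _, hw, _, he⟩ => ⟨_, hu, _, hw, he⟩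

theorem IsProperEdgeColoring.ncard_colorsAt {φ : Sym2 V → C} (hφ : IsProperEdgeColoring φ)
    {S : Set V} {v : V} (hv : v ∈ S) :
    (colorsAt φ S v).ncard = S.ncard - 1 := by
  rw [colorsAt, ((hφ.injOn v).mono fun _ hw => hw.2).ncard_image,
    ncard_sdiff_singleton_of_mem hv]

theorem IsProperEdgeColoring.colorsAt_eq_cliqueColors {φ : Sym2 V → C}
    (hφ : IsProperEdgeColoring φ) {S : Set V} (hS : S.Finite) {v : V} (hv : v ∈ S)
    (h : (cliqueColors φ S).ncard = S.ncard - 1) : colorsAt φ S v = cliqueColors φ S :=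
  eq_of_subset_of_ncard_le (colorsAt_subset_cliqueColors hv)
    (by rw [h, hφ.ncard_colorsAt hv]) (hS.cliqueColors φ)

theorem IsProperEdgeColoring.ncard_cliqueColors_of_subset_colorsAt {φ : Sym2 V → C}
    (hφ : IsProperEdgeColoring φ) {S : Set V} {v : V} (hv : v ∈ S)
    (h : cliqueColors φ S ⊆ colorsAt φ S v) : (cliqueColors φ S).ncard = S.ncard - 1 := by
  rw [← hφ.ncard_colorsAt hv, h.antisymm (colorsAt_subset_cliqueColors hv)]

section Partner

variable {φ : Sym2 V → C} {x y : ι → V} {c : C}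

theorem partner_ne (hc : c ∉ cliqueColors φ (range x))
    (hy : ∀ i, y i ≠ x i ∧ φ s(x i, y i) = c) (i j : ι) : y i ≠ x j := by
  intro h
  exact hc ⟨x i, mem_range_self i, x j, mem_range_self j, h ▸ (hy i).1.symm, h ▸ (hy i).2⟩

theorem partner_injective (hφ : IsProperEdgeColoring φ) (hxinj : Injective x)
    (hc : c ∉ cliqueColors φ (range x)) (hy : ∀ i, y i ≠ x i ∧ φ s(x i, y i) = c) :
    Injective y := by
  intro i j hij
  refine hxinj (hφ.eq_of_color_eq (partner_ne hc hy i i).symm (partner_ne hc hy i j).symm ?_)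
  rw [Sym2.eq_swap, (hy i).2, hij, Sym2.eq_swap, (hy j).2]

theorem color_partner_partner [Finite V] (hφ : IsProperEdgeColoring φ)
    (hC4 : ∀ a b : C, a ≠ b → IsC4Factor (colorPairGraph φ a b)) (hxinj : Injective x)
    (hc : c ∉ cliqueColors φ (range x)) (hy : ∀ i, y i ≠ x i ∧ φ s(x i, y i) = c)
    {i j : ι} (hij : i ≠ j) : φ s(y i, y j) = φ s(x i, x j) := by
  have hca : c ≠ φ s(x i, x j) := fun h =>
    hc ⟨x i, mem_range_self i, x j, mem_range_self j, hxinj.ne hij, h.symm⟩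
  rw [Sym2.eq_swap]
  exact hφ.color_eq_of_alternating_path hca (hC4 _ _ hca) (hy i).1 (hxinj.ne hij) (hy j).1.symm
    (by rw [Sym2.eq_swap, (hy i).2]) rfl (hy j).2

theorem exists_partner_color_eq [Finite V] (hφ : IsProperEdgeColoring φ)
    (hC4 : ∀ a b : C, a ≠ b → IsC4Factor (colorPairGraph φ a b)) (hxinj : Injective x)
    (hc : c ∉ cliqueColors φ (range x)) (hy : ∀ i, y i ≠ x i ∧ φ s(x i, y i) = c)
    (hH : ∀ j, colorsAt φ (range x) (x j) = cliqueColors φ (range x)) (o i j : ι) :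
    ∃ k, φ s(x o, y k) = φ s(x i, y j) := by
  rcases eq_or_ne i j with rfl | hij
  · exact ⟨o, by rw [(hy o).2, (hy i).2]⟩
  rcases eq_or_ne o i with rfl | hoi
  · exact ⟨j, rfl⟩
  have hab : φ s(x o, x i) ≠ φ s(x i, y j) := fun h =>
    partner_ne hc hy j o (hφ.eq_of_color_eq (partner_ne hc hy j i) (hxinj.ne hoi)
      (by rw [← h, Sym2.eq_swap]))
  obtain ⟨_, ⟨⟨k, rfl⟩, hkj⟩, hk⟩ : φ s(x o, x i) ∈ colorsAt φ (range x) (x j) :=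
    (hH j).symm ▸ ⟨x o, mem_range_self o, x i, mem_range_self i, hxinj.ne hoi, rfl⟩
  have hjk : j ≠ k := fun h => hkj (h ▸ rfl)
  refine ⟨k, ?_⟩
  rw [Sym2.eq_swap]
  exact hφ.color_eq_of_alternating_path hab (hC4 _ _ hab) (hxinj.ne hoi)
    (partner_ne hc hy j i).symm ((partner_injective hφ hxinj hc hy).ne hjk) rfl rfl
    (by rw [color_partner_partner hφ hC4 hxinj hc hy hjk]; exact hk)

theorem cliqueColors_union_subset_colorsAt [Finite V] (hφ : IsProperEdgeColoring φ)
    (hC4 : ∀ a b : C, a ≠ b → IsC4Factor (colorPairGraph φ a b)) (hxinj : Injective x)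
    (hc : c ∉ cliqueColors φ (range x)) (hy : ∀ i, y i ≠ x i ∧ φ s(x i, y i) = c)
    (hH : ∀ j, colorsAt φ (range x) (x j) = cliqueColors φ (range x)) (o : ι) :
    cliqueColors φ (range x ∪ range y) ⊆ colorsAt φ (range x ∪ range y) (x o) := by
  have hxx : ∀ i j, i ≠ j → φ s(x i, x j) ∈ colorsAt φ (range x ∪ range y) (x o) :=
    fun i j hij => colorsAt_mono subset_union_left _
      ((hH o).symm ▸ ⟨x i, mem_range_self i, x j, mem_range_self j, hxinj.ne hij, rfl⟩)
  have hxy : ∀ i j, φ s(x i, y j) ∈ colorsAt φ (range x ∪ range y) (x o) := fun i j =>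
    have ⟨k, hk⟩ := exists_partner_color_eq hφ hC4 hxinj hc hy hH o i j
    ⟨y k, ⟨.inr (mem_range_self k), partner_ne hc hy k o⟩, hk⟩
  rintro _ ⟨_, ⟨i, rfl⟩ | ⟨i, rfl⟩, _, ⟨j, rfl⟩ | ⟨j, rfl⟩, hne, rfl⟩
  · exact hxx i j (ne_of_apply_ne x hne)
  · exact hxy i j
  · rw [Sym2.eq_swap]
    exact hxy j i
  · rw [color_partner_partner hφ hC4 hxinj hc hy (ne_of_apply_ne y hne)]
    exact hxx i j (ne_of_apply_ne y hne)

end Partner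

theorem clique_doubling_general (m h : ℕ)
    (μ : Sym2 (Fin (2 * m)) → Fin (2 * m - 1))
    (hproper : IsProperEdgeColoring μ)
    (hC4 : ∀ a b : Fin (2 * m - 1), a ≠ b → IsC4Factor (colorPairGraph μ a b))
    (x : Fin (2 ^ h) → Fin (2 * m)) (hxinj : Function.Injective x)
    (hHcolors : (cliqueColors μ (Set.range x)).ncard = 2 ^ h - 1)
    (c : Fin (2 * m - 1)) (hc : c ∉ cliqueColors μ (Set.range x))
    (y : Fin (2 ^ h) → Fin (2 * m))
    (hy : ∀ i, y i ≠ x i ∧ μ s(x i, y i) = c) :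
    (∀ i j, y i ≠ x j) ∧
    Function.Injective y ∧
    (∀ i j, i ≠ j → μ s(x i, x j) = μ s(y i, y j)) ∧
    (cliqueColors μ (Set.range x ∪ Set.range y)).ncard = 2 ^ (h + 1) - 1 := by
  have hyinj := partner_injective hproper hxinj hc hy
  have hH : ∀ j, colorsAt μ (range x) (x j) = cliqueColors μ (range x) := fun j =>
    hproper.colorsAt_eq_cliqueColors (toFinite _) (mem_range_self j)
      (by rw [hHcolors, ncard_range_of_injective hxinj, Nat.card_fin])
  have hS : (range x ∪ range y).ncard = 2 ^ h + 2 ^ h := by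
    rw [ncard_union_eq (disjoint_range_iff.2 fun i j => (partner_ne hc hy j i).symm),
      ncard_range_of_injective hxinj, ncard_range_of_injective hyinj, Nat.card_fin]
  refine ⟨partner_ne hc hy, hyinj,
    fun i j hij => (color_partner_partner hproper hC4 hxinj hc hy hij).symm, ?_⟩
  let o : Fin (2 ^ h) := ⟨0, by positivity⟩
  rw [hproper.ncard_cliqueColors_of_subset_colorsAt (.inl (mem_range_self o))
    (cliqueColors_union_subset_colorsAt hproper hC4 hxinj hc hy hH o), hS, pow_succ]
  omega

/-- The inductive step in the proof of Lemma 2(b): given a clique `H = {x₁, …, x_{2^h}}`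
using exactly `2^h - 1` colors, a color `c` not appearing on `H`, and `yᵢ` the vertex
joined to `xᵢ` by an edge of color `c`, the set `H' = {y₁, …, y_{2^h}}` is disjoint from
`H`, corresponding edges of `H` and `H'` receive the same color, and the clique induced
by `H ∪ H'` uses exactly `2^{h+1} - 1` colors. -/
theorem clique_doubling (m h : ℕ)
    (μ : Sym2 (Fin (2 * m)) → Fin (2 * m - 1))
    (hproper : IsProperEdgeColoring μ)
    (hC4 : ∀ a b : Fin (2 * m - 1), a ≠ b → IsC4Factor (colorPairGraph μ a b))
    (hsize : 2 ^ h < 2 * m)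
    (x : Fin (2 ^ h) → Fin (2 * m)) (hxinj : Function.Injective x)
    (hHcolors : (cliqueColors μ (Set.range x)).ncard = 2 ^ h - 1)
    (c : Fin (2 * m - 1)) (hc : c ∉ cliqueColors μ (Set.range x))
    (y : Fin (2 ^ h) → Fin (2 * m))
    (hy : ∀ i, y i ≠ x i ∧ μ s(x i, y i) = c) :
    (∀ i j, y i ≠ x j) ∧
    Function.Injective y ∧
    (∀ i j, i ≠ j → μ s(x i, x j) = μ s(y i, y j)) ∧
    (cliqueColors μ (Set.range x ∪ Set.range y)).ncard = 2 ^ (h + 1) - 1 :=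
  clique_doubling_general m h μ hproper hC4 x hxinj hHcolors c hc y hy
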